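/- arXiv:math/0703366 — 3 statements merged into one kernel-verified Lean document; each statement's English description precedes it below -/
import Mathlib

section
/- In the polynomial ring k[x,y,z,w] over a field k of characteristic zero, the ideal I₂ = (x² + yw, y² + zw, z² + xw) is a radical ideal. -/
/-!
Over `k[w]`, the quotient `A = k[x,y,z,w] / I₂` is spanned by the eight squarefree monomials
in `x, y, z`: the relations `x² = -wy`, `y² = -wz`, `z² = -wx` rewrite any product back into
their span. On the other hand `I₂` vanishes on the eight lines `t ↦ (-at, -a²t, -a⁴t, t)`
with `a⁸ = a`, and on the line with parameter `a` the monomial `x^ε₀ y^ε₁ z^ε₂` restricts to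
`a^(ε₀ + 2ε₁ + 4ε₂) (-t)^(ε₀ + ε₁ + ε₂)`. In characteristic zero the eight parameters (`0` and
the seventh roots of unity) are distinct, so by Vandermonde an element of `A` vanishing on all
eight lines is zero. Hence `I₂` is the intersection of the kernels of these eight evaluations
into the domain `K[t]`, an intersection of prime ideals.
-/

open MvPolynomial Set Submodule

section
variable {S A : Type*} [CommRing S] [CommRing A] [Algebra S A]

/-- Indexed in binary: bit `0`, `1`, `2` of `i` records whether `x`, `y`, `z` divides
the monomial. -/
def squarefreeMonomial (x y z : A) : Fin 8 → A := ![1, x, y, x * y, z, x * z, y * z, x * y * z]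

variable {w : S} {x y z : A}

theorem mul_squarefreeMonomial_mem_span (hx : x ^ 2 = -(w • y)) (hy : y ^ 2 = -(w • z))
    (hz : z ^ 2 = -(w • x)) (i : Fin 8) :
    x * squarefreeMonomial x y z i ∈ span S (range (squarefreeMonomial x y z)) := by
  have key : x * squarefreeMonomial x y z i = ![1, -w, 1, w ^ 2, 1, -w, 1, -w ^ 3] i •
      squarefreeMonomial x y z (![1, 2, 3, 4, 5, 6, 7, 1] i) := by
    simp only [Algebra.smul_def] at hx hy hz ⊢
    fin_cases i <;> simp [squarefreeMonomial] <;> grind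
  rw [key]
  exact smul_mem _ _ (subset_span (mem_range_self _))

theorem mul_mem_span_squarefreeMonomial (hx : x ^ 2 = -(w • y)) (hy : y ^ 2 = -(w • z))
    (hz : z ^ 2 = -(w • x)) {a : A} (ha : a ∈ span S (range (squarefreeMonomial x y z))) :
    x * a ∈ span S (range (squarefreeMonomial x y z)) := by
  induction ha using span_induction with
  | mem _ h => obtain ⟨i, rfl⟩ := h; exact mul_squarefreeMonomial_mem_span hx hy hz i
  | zero => simp
  | add _ _ _ _ ha hb => rw [mul_add]; exact add_mem ha hb
  | smul r _ _ ha => rw [mul_smul_comm]; exact smul_mem _ r ha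

theorem squarefreeMonomial_rotate (x y z : A) :
    squarefreeMonomial y z x = squarefreeMonomial x y z ∘ ![0, 2, 4, 6, 1, 3, 5, 7] := by
  funext i; fin_cases i <;> simp [squarefreeMonomial] <;> ring

theorem span_range_squarefreeMonomial_rotate (x y z : A) :
    span S (range (squarefreeMonomial y z x)) = span S (range (squarefreeMonomial x y z)) := by
  rw [squarefreeMonomial_rotate, Function.Surjective.range_comp (by decide)]

theorem adjoin_le_span_squarefreeMonomial (hx : x ^ 2 = -(w • y)) (hy : y ^ 2 = -(w • z))
    (hz : z ^ 2 = -(w • x)) :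
    Subalgebra.toSubmodule (Algebra.adjoin S {x, y, z}) ≤
      span S (range (squarefreeMonomial x y z)) := by
  have hM : ∀ a ∈ Algebra.adjoin S {x, y, z},
      ∀ m ∈ span S (range (squarefreeMonomial x y z)),
        a * m ∈ span S (range (squarefreeMonomial x y z)) := by
    intro a ha
    induction ha using Algebra.adjoin_induction with
    | mem v hv =>
      rcases hv with rfl | rfl | rfl
      · exact fun m hm => mul_mem_span_squarefreeMonomial hx hy hz hm
      · rw [← span_range_squarefreeMonomial_rotate]
        exact fun m hm => mul_mem_span_squarefreeMonomial hy hz hx hm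
      · rw [← span_range_squarefreeMonomial_rotate, ← span_range_squarefreeMonomial_rotate]
        exact fun m hm => mul_mem_span_squarefreeMonomial hz hx hy hm
    | algebraMap r => exact fun m hm => by rw [← Algebra.smul_def]; exact smul_mem _ r hm
    | add a b _ _ ha hb => exact fun m hm => by rw [add_mul]; exact add_mem (ha m hm) (hb m hm)
    | mul a b _ _ ha hb => exact fun m hm => by rw [mul_assoc]; exact ha _ (hb m hm)
  intro a ha
  simpa using hM a ha 1 (subset_span ⟨0, rfl⟩)

theorem map_squarefreeMonomial {B F : Type*} [CommRing B] [FunLike F A B] [RingHomClass F A B]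
    (φ : F) (x y z : A) (i : Fin 8) :
    φ (squarefreeMonomial x y z i) = squarefreeMonomial (φ x) (φ y) (φ z) i := by
  fin_cases i <;> simp [squarefreeMonomial]

end

section
variable (k : Type*) [Field k]

noncomputable def cyclicIdeal : Ideal (MvPolynomial (Fin 4) k) :=
  Ideal.span {X 0 ^ 2 + X 1 * X 3, X 1 ^ 2 + X 2 * X 3, X 2 ^ 2 + X 0 * X 3}

theorem exists_sub_sum_squarefreeMonomial_mem (f : MvPolynomial (Fin 4) k) :
    ∃ c : Fin 8 → Polynomial k,
      f - ∑ i, Polynomial.aeval (X 3) (c i) * squarefreeMonomial (X 0) (X 1) (X 2) i ∈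
        cyclicIdeal k := by
  set π := Ideal.Quotient.mkₐ k (cyclicIdeal k)
  let _ : Algebra (Polynomial k) (MvPolynomial (Fin 4) k ⧸ cyclicIdeal k) :=
    (Polynomial.aeval (π (X 3))).toAlgebra
  have hsmul (p : Polynomial k) (a) : p • a = π (Polynomial.aeval (X 3) p) * a := by
    rw [Algebra.smul_def, ← Polynomial.aeval_algHom_apply]; rfl
  have hrel (u v : MvPolynomial (Fin 4) k) (h : u ^ 2 + v * X 3 ∈ cyclicIdeal k) :
      π u ^ 2 = -((Polynomial.X : Polynomial k) • π v) := by
    have h0 : π (u ^ 2 + v * X 3) = 0 := Ideal.Quotient.eq_zero_iff_mem.2 h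
    rw [map_add, map_mul, map_pow] at h0
    rw [hsmul, Polynomial.aeval_X]
    linear_combination h0
  have hgen : π f ∈ Algebra.adjoin (Polynomial k) {π (X 0), π (X 1), π (X 2)} := by
    induction f using MvPolynomial.induction_on with
    | C a =>
      convert Subalgebra.algebraMap_mem _ (Polynomial.C a)
      exact ((Polynomial.aeval_C (π (X 3)) a).trans (π.commutes a)).symm
    | add p q hp hq => rw [map_add]; exact add_mem hp hq
    | mul_X p n hp =>
      rw [map_mul]
      refine mul_mem hp ?_
      fin_cases n
      · exact Algebra.subset_adjoin (by simp)
      · exact Algebra.subset_adjoin (by simp)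
      · exact Algebra.subset_adjoin (by simp)
      · convert Subalgebra.algebraMap_mem _ Polynomial.X
        exact (Polynomial.aeval_X (π (X 3))).symm
  obtain ⟨c, hc⟩ := (Submodule.mem_span_range_iff_exists_fun _).1 <|
    adjoin_le_span_squarefreeMonomial (hrel _ _ (Ideal.subset_span (by simp)))
      (hrel _ _ (Ideal.subset_span (by simp))) (hrel _ _ (Ideal.subset_span (by simp))) hgen
  refine ⟨c, Ideal.Quotient.eq.1 ?_⟩
  change π f = π _
  simp only [← hc, hsmul, map_sum, map_mul, map_squarefreeMonomial]

variable {k} {K : Type*} [Field K] [Algebra k K]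

noncomputable def lineEval (a : K) : MvPolynomial (Fin 4) k →ₐ[k] Polynomial K :=
  aeval ![Polynomial.C a * -Polynomial.X, Polynomial.C a ^ 2 * -Polynomial.X,
    Polynomial.C a ^ 4 * -Polynomial.X, Polynomial.X]

theorem cyclicIdeal_le_ker_lineEval {a : K} (ha : a ^ 8 = a) :
    cyclicIdeal k ≤ RingHom.ker (lineEval a) := by
  rw [cyclicIdeal, Ideal.span_le]
  rintro g (rfl | rfl | rfl) <;> simp [lineEval]
  · ring
  · ring
  · have hC : Polynomial.C a ^ 8 = Polynomial.C a := by rw [← map_pow, ha]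
    linear_combination Polynomial.X ^ 2 * hC

theorem lineEval_aeval_X_three (a : K) (p : Polynomial k) :
    lineEval a (Polynomial.aeval (X 3 : MvPolynomial (Fin 4) k) p) = p.map (algebraMap k K) := by
  rw [← Polynomial.aeval_algHom_apply, ← Polynomial.aeval_X_left_eq_map]
  simp [lineEval]

theorem lineEval_squarefreeMonomial (a : K) (i : Fin 8) :
    lineEval a (squarefreeMonomial (X 0) (X 1) (X 2) i : MvPolynomial (Fin 4) k) =
      Polynomial.C a ^ (i : ℕ) * (-Polynomial.X) ^ ![0, 1, 1, 2, 1, 2, 2, 3] i := by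
  rw [map_squarefreeMonomial]
  fin_cases i <;> simp [lineEval, squarefreeMonomial] <;> ring

theorem eq_zero_of_lineEval_sum_squarefreeMonomial_eq_zero {a : Fin 8 → K}
    (ha : Function.Injective a) {c : Fin 8 → Polynomial k}
    (hc : ∀ j, lineEval (a j) (∑ i, Polynomial.aeval (X 3 : MvPolynomial (Fin 4) k) (c i) *
      squarefreeMonomial (X 0) (X 1) (X 2) i) = 0) :
    c = 0 := by
  have hv := Matrix.eq_zero_of_forall_index_sum_pow_mul_eq_zero
    (Polynomial.C_injective.comp ha)
    (v := fun i => (-Polynomial.X) ^ ![0, 1, 1, 2, 1, 2, 2, 3] i * (c i).map (algebraMap k K))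
    fun j => by
      rw [← hc j, map_sum]
      refine Finset.sum_congr rfl fun i _ => ?_
      simp only [Function.comp_apply, map_mul, lineEval_aeval_X_three,
        lineEval_squarefreeMonomial]
      ring
  funext i
  have := congrFun hv i
  simpa [Polynomial.X_ne_zero, Polynomial.map_eq_zero] using this

theorem cyclicIdeal_eq_iInf_ker_lineEval {a : Fin 8 → K} (ha_inj : Function.Injective a)
    (ha : ∀ i, a i ^ 8 = a i) :
    cyclicIdeal k = ⨅ i, RingHom.ker (lineEval (k := k) (a i)) := by
  refine le_antisymm (le_iInf fun i => cyclicIdeal_le_ker_lineEval (ha i)) fun f hf => ?_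
  obtain ⟨c, hc⟩ := exists_sub_sum_squarefreeMonomial_mem k f
  have hc0 : c = 0 := eq_zero_of_lineEval_sum_squarefreeMonomial_eq_zero ha_inj fun j => by
    have hfj : lineEval (a j) f = 0 := Ideal.mem_iInf.1 hf j
    simpa [hfj] using cyclicIdeal_le_ker_lineEval (ha j) hc
  simpa [hc0] using hc

end

theorem exists_injective_pow_eight_eq_self {K : Type*} [Field K] {ζ : K}
    (hζ : IsPrimitiveRoot ζ 7) :
    ∃ a : Fin 8 → K, Function.Injective a ∧ ∀ i, a i ^ 8 = a i := by
  classical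
  set s := insert 0 (Polynomial.nthRootsFinset 7 (1 : K))
  have hs : Fintype.card s = 8 := by
    rw [Fintype.card_coe, Finset.card_insert_of_notMem (by simp [Polynomial.mem_nthRootsFinset]),
      hζ.card_nthRootsFinset]
  refine ⟨fun i => (Fintype.equivFinOfCardEq hs).symm i,
    Subtype.val_injective.comp (Fintype.equivFinOfCardEq hs).symm.injective, fun i => ?_⟩
  obtain h | h := Finset.mem_insert.1 ((Fintype.equivFinOfCardEq hs).symm i).2
  all_goals dsimp only
  · rw [h]; norm_num
  · rw [pow_succ, (Polynomial.mem_nthRootsFinset (by norm_num) 1).1 h, one_mul]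

theorem stmt_0 (k : Type) [Field k] [CharZero k] :
    (Ideal.span {(X 0 : MvPolynomial (Fin 4) k) ^ 2 + X 1 * X 3,
        (X 1 : MvPolynomial (Fin 4) k) ^ 2 + X 2 * X 3,
        (X 2 : MvPolynomial (Fin 4) k) ^ 2 + X 0 * X 3}).IsRadical := by
  obtain ⟨a, ha_inj, ha⟩ := exists_injective_pow_eight_eq_self
    (IsCyclotomicExtension.zeta_spec 7 k (CyclotomicField 7 k))
  change (cyclicIdeal k).IsRadical
  rw [cyclicIdeal_eq_iInf_ker_lineEval ha_inj ha]
  exact Ideal.isRadical_iInf _ fun i => (RingHom.ker_isPrime _).isRadical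
end

section
/- In the polynomial ring k[x,y,z,w] over a field k of characteristic zero, the ideal I₂ = (x² + yw, y² + zw, z² + xw) has height 3, i.e., it is a complete intersection of three quadrics. -/
open MvPolynomial

noncomputable section

/-- The height of an ideal: the infimum of heights of primes containing it. -/
def idealHeight {R : Type*} [CommRing R] (I : Ideal R) : ℕ∞ :=
  ⨅ P ∈ {P : PrimeSpectrum R | I ≤ P.asIdeal}, Order.height P

/-!
Write `x, y, z, w` for `X 0, X 1, X 2, X 3` and `I` for the ideal. Krull's height theorem gives
`height I ≤ 3`. For the lower bound let `P ⊇ I` be prime with residue map `ι : R → κ(P)`.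
Substituting `ι (X i)` for the variables `X i` with `i ∈ s` and leaving the others free gives maps
`R → κ(P)[X]` whose kernels are primes, increasing in `s` and contained in `ker ι = P`; three of
them are separated strictly below `P` by explicit polynomials. If `w ∉ P`, take
`∅ ⊆ {x, w} ⊆ {x, y, w}` with witnesses `x⁸ + xw⁷`, `x² + yw`, `w³z + x⁴`, all in `I`; the last
two survive the smaller substitution because `ι w ≠ 0`. If `w ∈ P`, then `x, z ∈ P`, and
`∅ ⊆ {x} ⊆ {x, z}` with witnesses `x`, `z`, `w` works.
-/

theorem idealHeight_eq_height {R : Type*} [CommRing R] (I : Ideal R) :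
    idealHeight I = I.height := by
  refine le_antisymm ?_ ?_
  · rw [Ideal.height_eq_inf_minimalPrimes]
    refine le_iInf₂ fun J hJ => ?_
    have := hJ.isPrime
    exact (iInf₂_le (⟨J, this⟩ : PrimeSpectrum R) hJ.1.2).trans_eq
      (PrimeSpectrum.height_eq_orderHeight ⟨J, this⟩).symm
  · refine le_iInf₂ fun P hP => ?_
    rw [← PrimeSpectrum.height_eq_orderHeight]
    exact Ideal.height_mono hP

theorem Ideal.height_span_le_encard {R : Type*} [CommRing R] [IsNoetherianRing R] {s : Set R}
    (hs : Ideal.span s ≠ ⊤) : (Ideal.span s).height ≤ s.encard :=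
  (Ideal.height_le_spanFinrank _ hs).trans (Submodule.spanFinrank_span_le_encard s)

theorem Set.encard_le_three {α : Type*} (a b c : α) : ({a, b, c} : Set α).encard ≤ 3 := by
  classical
  rw [show ({a, b, c} : Set α) = ↑({a, b, c} : Finset α) by simp,
    Set.encard_coe_eq_coe_finsetCard]
  exact_mod_cast Finset.card_le_three

theorem Ideal.three_le_height_of_lt {R : Type*} [CommRing R] {q₀ q₁ q₂ q₃ : Ideal R}
    [q₀.IsPrime] [q₁.IsPrime] [q₂.IsPrime] [q₃.IsPrime]
    (h₀ : q₀ < q₁) (h₁ : q₁ < q₂) (h₂ : q₂ < q₃) : 3 ≤ q₃.height :=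
  calc (3 : ℕ∞) = 0 + 1 + 1 + 1 := by norm_num
    _ ≤ q₀.height + 1 + 1 + 1 := by gcongr; exact zero_le
    _ ≤ q₁.height + 1 + 1 := by gcongr; exact Ideal.height_add_one_le_of_lt_of_isPrime h₀
    _ ≤ q₂.height + 1 := by gcongr; exact Ideal.height_add_one_le_of_lt_of_isPrime h₁
    _ ≤ q₃.height := Ideal.height_add_one_le_of_lt_of_isPrime h₂

namespace MvPolynomial

theorem C_mul_X_add_C_ne_zero {σ K : Type*} [CommRing K] [Nontrivial K] {b : K} (hb : b ≠ 0)
    (i : σ) (c : K) : C b * X i + C c ≠ 0 := by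
  classical
  intro h
  have := congrArg (coeff (Finsupp.single i 1)) h
  exact hb (by simpa [(Finsupp.single_ne_zero.mpr one_ne_zero).symm] using this)

variable {σ R K : Type*} [CommRing R] [CommRing K] [DecidableEq σ]

def partialEval (ι : MvPolynomial σ R →+* K) (s : Finset σ) :
    MvPolynomial σ R →+* MvPolynomial σ K :=
  eval₂Hom (C.comp (ι.comp C)) fun i => if i ∈ s then C (ι (X i)) else X i

variable (ι : MvPolynomial σ R →+* K)

@[simp] theorem partialEval_C (s : Finset σ) (r : R) :
    partialEval ι s (C r) = C (ι (C r)) := eval₂_C _ _ _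

@[simp] theorem partialEval_X (s : Finset σ) (i : σ) :
    partialEval ι s (X i) = if i ∈ s then C (ι (X i)) else X i := eval₂_X _ _ _

theorem partialEval_comp_of_subset {s t : Finset σ} (hst : s ⊆ t) :
    (partialEval (eval (ι ∘ X)) t).comp (partialEval ι s) = partialEval ι t := by
  refine ringHom_ext (fun r => by simp) fun i => ?_
  by_cases hs : i ∈ s
  · simp [hs, hst hs]
  · simp [hs]

theorem eval_comp_partialEval (s : Finset σ) : (eval (ι ∘ X)).comp (partialEval ι s) = ι := by
  refine ringHom_ext (fun r => by simp) fun i => ?_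
  by_cases hs : i ∈ s <;> simp [hs]

theorem ker_partialEval_mono {s t : Finset σ} (hst : s ⊆ t) :
    RingHom.ker (partialEval ι s) ≤ RingHom.ker (partialEval ι t) := by
  rw [← partialEval_comp_of_subset ι hst, ← RingHom.comap_ker]
  exact Ideal.ker_le_comap _

theorem ker_partialEval_le_ker (s : Finset σ) :
    RingHom.ker (partialEval ι s) ≤ RingHom.ker ι := by
  conv_rhs => rw [← eval_comp_partialEval ι s, ← RingHom.comap_ker]
  exact Ideal.ker_le_comap _

theorem ker_partialEval_lt_ker_partialEval {s t : Finset σ} (hst : s ⊆ t) (f : MvPolynomial σ R)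
    (ht : partialEval ι t f = 0) (hs : partialEval ι s f ≠ 0) :
    RingHom.ker (partialEval ι s) < RingHom.ker (partialEval ι t) :=
  SetLike.lt_iff_le_and_exists.2 ⟨ker_partialEval_mono ι hst, f, ht, hs⟩

theorem ker_partialEval_lt_ker {s : Finset σ} (f : MvPolynomial σ R)
    (hι : ι f = 0) (hs : partialEval ι s f ≠ 0) :
    RingHom.ker (partialEval ι s) < RingHom.ker ι :=
  SetLike.lt_iff_le_and_exists.2 ⟨ker_partialEval_le_ker ι s, f, hι, hs⟩

end MvPolynomial

attribute [local instance] RingHom.ker_isPrime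

section CyclicQuadrics

variable (k : Type*) [CommRing k]

def cyclicQuadrics : Ideal (MvPolynomial (Fin 4) k) :=
  Ideal.span {(X 0 : MvPolynomial (Fin 4) k) ^ 2 + X 1 * X 3,
    (X 1 : MvPolynomial (Fin 4) k) ^ 2 + X 2 * X 3,
    (X 2 : MvPolynomial (Fin 4) k) ^ 2 + X 0 * X 3}

theorem cyclicQuadrics_le_ker_constantCoeff :
    cyclicQuadrics k ≤ RingHom.ker (constantCoeff : MvPolynomial (Fin 4) k →+* k) := by
  simp [cyclicQuadrics, Ideal.span_le, Set.insert_subset_iff]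

theorem height_cyclicQuadrics_le_three [IsNoetherianRing k] [Nontrivial k] :
    (cyclicQuadrics k).height ≤ 3 :=
  (Ideal.height_span_le_encard
    (ne_top_of_le_ne_top (RingHom.ker_ne_top _) (cyclicQuadrics_le_ker_constantCoeff k))).trans
    (Set.encard_le_three _ _ _)

variable {k}

theorem mem_cyclicQuadrics_of_eq {f : MvPolynomial (Fin 4) k} (c₀ c₁ c₂ : MvPolynomial (Fin 4) k)
    (h : f = c₀ * (X 0 ^ 2 + X 1 * X 3) + c₁ * (X 1 ^ 2 + X 2 * X 3) +
      c₂ * (X 2 ^ 2 + X 0 * X 3)) :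
    f ∈ cyclicQuadrics k := by
  rw [h]
  refine Ideal.add_mem _ (Ideal.add_mem _ ?_ ?_) ?_ <;>
    exact Ideal.mul_mem_left _ _ (Ideal.subset_span (by simp))

variable {P : Ideal (MvPolynomial (Fin 4) k)} [P.IsPrime]

local notation "ι" => algebraMap (MvPolynomial (Fin 4) k) P.ResidueField

theorem three_le_height_of_X_three_mem (hP : cyclicQuadrics k ≤ P) (hw : X 3 ∈ P) :
    3 ≤ P.height := by
  have hx : X 0 ∈ P := Ideal.IsPrime.mem_of_pow_mem ‹_› 2 <| by
    have h₀ : X 0 ^ 2 + X 1 * X 3 ∈ P := hP (mem_cyclicQuadrics_of_eq 1 0 0 (by ring))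
    simpa using P.sub_mem h₀ (P.mul_mem_left (X 1) hw)
  have hz : X 2 ∈ P := Ideal.IsPrime.mem_of_pow_mem ‹_› 2 <| by
    have h₂ : X 2 ^ 2 + X 0 * X 3 ∈ P := hP (mem_cyclicQuadrics_of_eq 0 0 1 (by ring))
    simpa using P.sub_mem h₂ (P.mul_mem_left (X 0) hw)
  rw [← Ideal.ker_algebraMap_residueField P]
  exact Ideal.three_le_height_of_lt
    (ker_partialEval_lt_ker_partialEval ι (s := ∅) (t := {0}) (by simp) (X 0) (by simp [hx])
      (by simp))
    (ker_partialEval_lt_ker_partialEval ι (s := {0}) (t := {0, 2}) (by simp) (X 2) (by simp [hz])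
      (by simp))
    (ker_partialEval_lt_ker ι (s := {0, 2}) (X 3) (by simp [hw]) (by simp))

theorem three_le_height_of_X_three_not_mem (hP : cyclicQuadrics k ≤ P) (hw : X 3 ∉ P) :
    3 ≤ P.height := by
  have h₀ : X 0 ^ 2 + X 1 * X 3 ∈ P := hP <| mem_cyclicQuadrics_of_eq 1 0 0 (by ring)
  have h₈ : X 0 ^ 8 + X 0 * X 3 ^ 7 ∈ P := hP <| mem_cyclicQuadrics_of_eq
    ((X 0 ^ 2 - X 1 * X 3) * (X 0 ^ 4 + X 1 ^ 2 * X 3 ^ 2)) (X 3 ^ 4 * (X 1 ^ 2 - X 2 * X 3))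
    (X 3 ^ 6) (by ring)
  have h₄ : X 3 ^ 3 * X 2 + X 0 ^ 4 ∈ P :=
    hP <| mem_cyclicQuadrics_of_eq (X 0 ^ 2 - X 1 * X 3) (X 3 ^ 2) 0 (by ring)
  have hw' : ι (X 3) ≠ 0 := by simpa using hw
  rw [← Ideal.ker_algebraMap_residueField P]
  refine Ideal.three_le_height_of_lt
    (ker_partialEval_lt_ker_partialEval ι (s := ∅) (t := {0, 3}) (by simp)
      (X 0 ^ 8 + X 0 * X 3 ^ 7) ?_ ?_)
    (ker_partialEval_lt_ker_partialEval ι (s := {0, 3}) (t := {0, 1, 3}) (by simp)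
      (X 0 ^ 2 + X 1 * X 3) ?_ ?_)
    (ker_partialEval_lt_ker ι (s := {0, 1, 3}) (X 3 ^ 3 * X 2 + X 0 ^ 4)
      (Ideal.algebraMap_residueField_eq_zero.2 h₄) ?_)
  · simpa using congrArg C (Ideal.algebraMap_residueField_eq_zero.2 h₈)
  · intro h
    simpa using congrArg (eval ![1, 0, 0, 0]) h
  · simpa using congrArg C (Ideal.algebraMap_residueField_eq_zero.2 h₀)
  · refine fun h => C_mul_X_add_C_ne_zero hw' 1 (ι (X 0) ^ 2) (Eq.trans ?_ h)
    simp
    ring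
  · refine fun h => C_mul_X_add_C_ne_zero (pow_ne_zero 3 hw') 2 (ι (X 0) ^ 4) (Eq.trans ?_ h)
    simp

theorem three_le_height_of_cyclicQuadrics_le (hP : cyclicQuadrics k ≤ P) : 3 ≤ P.height := by
  by_cases hw : X 3 ∈ P
  · exact three_le_height_of_X_three_mem hP hw
  · exact three_le_height_of_X_three_not_mem hP hw

variable (k) in
theorem height_cyclicQuadrics [IsNoetherianRing k] [Nontrivial k] :
    (cyclicQuadrics k).height = 3 := by
  refine le_antisymm (height_cyclicQuadrics_le_three k) ?_
  rw [Ideal.height_eq_inf_minimalPrimes]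
  exact le_iInf₂ fun Q hQ => have := hQ.isPrime; three_le_height_of_cyclicQuadrics_le hQ.1.2

end CyclicQuadrics

theorem stmt_1_general (k : Type) [Field k] :
    idealHeight (Ideal.span {(X 0 : MvPolynomial (Fin 4) k) ^ 2 + X 1 * X 3,
        (X 1 : MvPolynomial (Fin 4) k) ^ 2 + X 2 * X 3,
        (X 2 : MvPolynomial (Fin 4) k) ^ 2 + X 0 * X 3}) = 3 := by
  rw [idealHeight_eq_height]
  exact height_cyclicQuadrics k

theorem stmt_1 (k : Type) [Field k] [CharZero k] :
    idealHeight (Ideal.span {(X 0 : MvPolynomial (Fin 4) k) ^ 2 + X 1 * X 3,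
        (X 1 : MvPolynomial (Fin 4) k) ^ 2 + X 2 * X 3,
        (X 2 : MvPolynomial (Fin 4) k) ^ 2 + X 0 * X 3}) = 3 :=
  stmt_1_general k
end
end

section
/- In a commutative ring R, if J ⊆ I are ideals with I^{n+1} = J·I^n for some n, then for any ideal K with I ⊆ K and K^{m+1} = J'·K^m, it does NOT follow in general that the cores satisfy core(I) ⊆ core(K); concretely, there exist a Noetherian local ring R and integrally closed ideals I ⊆ I' with core(I) ⊄ core(I'). -/
/-- `J` is a reduction of `I` if `J ⊆ I` and `I^(n+1) = J·I^n` for some `n`. -/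
def IsReduction {R : Type*} [CommRing R] (J I : Ideal R) : Prop :=
  J ≤ I ∧ ∃ n : ℕ, I ^ (n + 1) = J * I ^ n

/-- The core of an ideal: the intersection of all its reductions. -/
def core {R : Type*} [CommRing R] (I : Ideal R) : Ideal R :=
  sInf {J : Ideal R | IsReduction J I}

/-- An ideal is integrally closed if every element integral over it lies in it. -/
def IsIntegrallyClosedIdeal {R : Type*} [CommRing R] (I : Ideal R) : Prop :=
  ∀ r : R,
    (∃ n : ℕ, 0 < n ∧ ∃ a : ℕ → R, (∀ i ∈ Finset.Icc 1 n, a i ∈ I ^ i) ∧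
      r ^ n + ∑ i ∈ Finset.Icc 1 n, a i * r ^ (n - i) = 0) → r ∈ I

/-!
Let `R = k[x, y]` localized at the origin, `I = (x²)` and `I' = 𝔪² = (x, y)²`. A principal ideal
generated by a nonzerodivisor `g` has `g` in each of its reductions, so `x² ∈ core I`. On the other
hand `J = (xy, x² - y²)` satisfies `J 𝔪 = 𝔪³`, so it is a reduction of `𝔪²`, and `x² ∉ J`; hence
`x² ∉ core I'`. Both ideals are integrally closed: `(x²)` because `x` is prime, and `𝔪²` because it
is the preimage of `(T²)` under the blow-up chart `R → k[s]⟦T⟧`, `x ↦ T`, `y ↦ sT`, where `T` is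
prime.
-/

section IntegralClosure

variable {R S F : Type*} [CommRing R] [CommRing S] [FunLike F R S] [RingHomClass F R S]

def IsIntegralOverIdeal (I : Ideal R) (r : R) : Prop :=
  ∃ n : ℕ, 0 < n ∧ ∃ a : ℕ → R, (∀ i ∈ Finset.Icc 1 n, a i ∈ I ^ i) ∧
    r ^ n + ∑ i ∈ Finset.Icc 1 n, a i * r ^ (n - i) = 0

theorem isIntegrallyClosedIdeal_iff {I : Ideal R} :
    IsIntegrallyClosedIdeal I ↔ ∀ r, IsIntegralOverIdeal I r → r ∈ I :=
  Iff.rfl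

theorem IsIntegralOverIdeal.map {I : Ideal R} {r : R} (h : IsIntegralOverIdeal I r) (f : F) :
    IsIntegralOverIdeal (I.map f) (f r) := by
  obtain ⟨n, hn, a, ha, heq⟩ := h
  refine ⟨n, hn, f ∘ a, fun i hi => ?_, ?_⟩
  · rw [Function.comp_apply, ← Ideal.map_pow]
    exact Ideal.mem_map_of_mem f (ha i hi)
  · simpa using congrArg f heq

theorem IsIntegralOverIdeal.mono {I K : Ideal R} {r : R} (h : IsIntegralOverIdeal I r)
    (hIK : I ≤ K) : IsIntegralOverIdeal K r := by
  obtain ⟨n, hn, a, ha, heq⟩ := h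
  exact ⟨n, hn, a, fun i hi => Ideal.pow_right_mono hIK i (ha i hi), heq⟩

theorem IsIntegrallyClosedIdeal.comap {K : Ideal S} (hK : IsIntegrallyClosedIdeal K) (f : F) :
    IsIntegrallyClosedIdeal (K.comap f) :=
  isIntegrallyClosedIdeal_iff.mpr fun r hr => hK (f r) ((hr.map f).mono Ideal.map_comap_le)

theorem isIntegrallyClosedIdeal_span_sq [IsDomain R] {p : R} (hp : Prime p) :
    IsIntegrallyClosedIdeal (Ideal.span {p ^ 2}) := by
  rintro r ⟨n, hn, a, ha, heq⟩
  have ha : ∀ i ∈ Finset.Icc 1 n, p ^ (2 * i) ∣ a i := fun i hi => by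
    simpa [Ideal.span_singleton_pow, Ideal.mem_span_singleton, pow_mul] using ha i hi
  have hrn : r ^ n = -∑ i ∈ Finset.Icc 1 n, a i * r ^ (n - i) := eq_neg_of_add_eq_zero_left heq
  obtain ⟨c, rfl⟩ : p ∣ r := hp.dvd_of_dvd_pow (n := n) <| hrn ▸ dvd_neg.mpr <|
    Finset.dvd_sum fun i hi => (dvd_pow_self p (by have := (Finset.mem_Icc.mp hi).1; omega)).trans
      ((ha i hi).mul_right _)
  have hsum : p ^ n * p ∣ ∑ i ∈ Finset.Icc 1 n, a i * (p * c) ^ (n - i) :=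
    Finset.dvd_sum fun i hi => by
      obtain ⟨hi1, hin⟩ := Finset.mem_Icc.mp hi
      rw [← pow_succ]
      exact (pow_dvd_pow p (by omega)).trans <| (pow_add p _ _).symm ▸
        mul_dvd_mul (ha i hi) (pow_dvd_pow_of_dvd (dvd_mul_right p c) _)
  have hpc : p ∣ c ^ n := by
    rw [← mul_dvd_mul_iff_left (pow_ne_zero n hp.ne_zero), ← mul_pow, hrn]
    exact dvd_neg.mpr hsum
  rw [Ideal.mem_span_singleton, pow_two]
  exact mul_dvd_mul_left p (hp.dvd_of_dvd_pow hpc)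

end IntegralClosure

section Core

variable {R : Type*} [CommRing R]

theorem core_le_of_isReduction {J I : Ideal R} (h : IsReduction J I) : core I ≤ J :=
  sInf_le h

theorem mem_core_span_singleton {g : R} (hg : g ∈ nonZeroDivisors R) :
    g ∈ core (Ideal.span {g}) := by
  refine Submodule.mem_sInf.mpr fun J ⟨_, n, hn⟩ => ?_
  have hg' : g * g ^ n ∈ J * Ideal.span {g ^ n} := by
    rw [← Ideal.span_singleton_pow, ← hn, Ideal.span_singleton_pow, ← pow_succ']
    exact Ideal.mem_span_singleton_self _
  obtain ⟨z, hz, hzg⟩ := Ideal.mem_mul_span_singleton.mp hg'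
  rw [mul_cancel_right_mem_nonZeroDivisors (pow_mem hg n)] at hzg
  exact hzg ▸ hz

theorem span_pair_pow_three_le (x y : R) :
    Ideal.span {x, y} ^ 3 ≤ Ideal.span {x * y, x ^ 2 - y ^ 2} * Ideal.span {x, y} := by
  set J := Ideal.span {x * y, x ^ 2 - y ^ 2}
  set m := Ideal.span {x, y}
  have hxy : x * y ∈ J := Ideal.subset_span (by simp)
  have hsq : x ^ 2 - y ^ 2 ∈ J := Ideal.subset_span (by simp)
  have hx : x ∈ m := Ideal.subset_span (by simp)
  have hy : y ∈ m := Ideal.subset_span (by simp)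
  have hx3 : x ^ 3 ∈ J * m := by
    rw [show x ^ 3 = (x ^ 2 - y ^ 2) * x + x * y * y by ring]
    exact add_mem (Ideal.mul_mem_mul hsq hx) (Ideal.mul_mem_mul hxy hy)
  have hy3 : y ^ 3 ∈ J * m := by
    rw [show y ^ 3 = x * y * x - (x ^ 2 - y ^ 2) * y by ring]
    exact sub_mem (Ideal.mul_mem_mul hxy hx) (Ideal.mul_mem_mul hsq hy)
  have hx2y : x ^ 2 * y ∈ J * m := by
    rw [show x ^ 2 * y = x * y * x by ring]; exact Ideal.mul_mem_mul hxy hx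
  have hxy2 : x * y ^ 2 ∈ J * m := by
    rw [show x * y ^ 2 = x * y * y by ring]; exact Ideal.mul_mem_mul hxy hy
  rw [pow_three, Ideal.span_mul_span', Ideal.span_mul_span', Ideal.span_le]
  rintro _ ⟨a, ha, _, ⟨b, hb, c, hc, rfl⟩, rfl⟩
  simp only [Set.mem_insert_iff, Set.mem_singleton_iff] at ha hb hc
  rcases ha with rfl | rfl <;> rcases hb with rfl | rfl <;> rcases hc with rfl | rfl <;>
    ring_nf at hx2y hxy2 ⊢ <;> assumption

theorem isReduction_span_pair_sq (x y : R) :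
    IsReduction (Ideal.span {x * y, x ^ 2 - y ^ 2}) (Ideal.span {x, y} ^ 2) := by
  set m := Ideal.span {x, y}
  have hJ : Ideal.span {x * y, x ^ 2 - y ^ 2} ≤ m ^ 2 := by
    have hx : x ∈ m := Ideal.subset_span (by simp)
    have hy : y ∈ m := Ideal.subset_span (by simp)
    rw [Ideal.span_le, Set.insert_subset_iff, Set.singleton_subset_iff]
    exact ⟨pow_two m ▸ Ideal.mul_mem_mul hx hy,
      sub_mem (Ideal.pow_mem_pow hx 2) (Ideal.pow_mem_pow hy 2)⟩
  refine ⟨hJ, 1, le_antisymm ?_ ((Ideal.mul_mono_left hJ).trans_eq (pow_succ' _ _).symm)⟩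
  calc (m ^ 2) ^ 2 = m ^ 3 * m := by ring
    _ ≤ _ * m * m := Ideal.mul_mono_left (span_pair_pow_three_le x y)
    _ = _ := by ring

end Core

section BlowupChart

variable {k R : Type*} [CommRing k] [CommRing R] [Algebra k R] {x y : R}

theorem sub_algebraMap_mem_ker (ε : R →ₐ[k] k) (r : R) :
    r - algebraMap k R (ε r) ∈ RingHom.ker ε := by
  rw [RingHom.mem_ker, map_sub, AlgHom.commutes, Algebra.algebraMap_self_apply, sub_self]

theorem exists_eq_linear_add_mem_sq (ε : R →ₐ[k] k)
    (hε : RingHom.ker ε = Ideal.span {x, y}) (r : R) :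
    ∃ c₀ c₁ c₂ : k, ∃ q ∈ Ideal.span {x, y} ^ 2, r = algebraMap k R c₀ + c₁ • x + c₂ • y + q := by
  have hmem (s : R) := hε ▸ sub_algebraMap_mem_ker ε s
  have hx : x ∈ Ideal.span {x, y} := Ideal.subset_span (by simp)
  have hy : y ∈ Ideal.span {x, y} := Ideal.subset_span (by simp)
  obtain ⟨f, g, hfg⟩ := Ideal.mem_span_pair.mp (hmem r)
  refine ⟨ε r, ε f, ε g, (f - algebraMap k R (ε f)) * x + (g - algebraMap k R (ε g)) * y, ?_, ?_⟩
  · rw [pow_two]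
    exact add_mem (Ideal.mul_mem_mul (hmem f) hx) (Ideal.mul_mem_mul (hmem g) hy)
  · rw [Algebra.smul_def, Algebra.smul_def]
    linear_combination -hfg

-- `ψ` is the chart `y = s x` of the blow-up of the origin, with `s = Polynomial.X` and
-- `x = PowerSeries.X`.
variable (ψ : R →ₐ[k] PowerSeries (Polynomial k)) (hψx : ψ x = PowerSeries.X)
  (hψy : ψ y = PowerSeries.C Polynomial.X * PowerSeries.X)
include hψx hψy

theorem span_pair_le_comap_span_X :
    Ideal.span {x, y} ≤ (Ideal.span {PowerSeries.X}).comap ψ := by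
  rw [Ideal.span_le, Set.insert_subset_iff, Set.singleton_subset_iff]
  simp only [SetLike.mem_coe, Ideal.mem_comap, hψx, hψy, Ideal.mem_span_singleton]
  exact ⟨dvd_rfl, dvd_mul_left _ _⟩

variable (ε : R →ₐ[k] k) (hε : RingHom.ker ε = Ideal.span {x, y})
include hε

theorem constantCoeff_apply_eq_C (r : R) :
    PowerSeries.constantCoeff (ψ r) = Polynomial.C (ε r) := by
  have hX : PowerSeries.X ∣ ψ (r - algebraMap k R (ε r)) := Ideal.mem_span_singleton.mp <|
    span_pair_le_comap_span_X ψ hψx hψy (hε ▸ sub_algebraMap_mem_ker ε r)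
  rw [map_sub, AlgHom.commutes, PowerSeries.X_dvd_iff, map_sub, sub_eq_zero] at hX
  rw [hX, PowerSeries.algebraMap_apply, PowerSeries.constantCoeff_C, Polynomial.algebraMap_eq]

theorem span_pair_sq_eq_comap :
    Ideal.span {x, y} ^ 2 = (Ideal.span {PowerSeries.X ^ 2}).comap ψ := by
  have hle : Ideal.span {x, y} ^ 2 ≤ (Ideal.span {PowerSeries.X ^ 2}).comap ψ := by
    rw [← Ideal.span_singleton_pow]
    exact (Ideal.pow_right_mono (span_pair_le_comap_span_X ψ hψx hψy) 2).trans
      (Ideal.le_comap_pow _ 2)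
  refine le_antisymm hle fun r hr => ?_
  obtain ⟨c₀, c₁, c₂, q, hq, rfl⟩ := exists_eq_linear_add_mem_sq ε hε r
  have hlin : PowerSeries.X ^ 2 ∣ ψ (algebraMap k R c₀ + c₁ • x + c₂ • y) := by
    rw [← Ideal.mem_span_singleton, ← Ideal.mem_comap, ← add_sub_cancel_right
      (algebraMap k R c₀ + c₁ • x + c₂ • y) q]
    exact sub_mem hr (hle hq)
  simp only [map_add, map_smul, AlgHom.commutes, hψx, hψy, PowerSeries.X_pow_dvd_iff] at hlin
  have h₀ : c₀ = 0 := by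
    simpa [PowerSeries.algebraMap_apply, PowerSeries.coeff_C] using hlin 0 (by norm_num)
  have h₁ : c₁ • (1 : Polynomial k) + c₂ • Polynomial.X = 0 := by
    simpa [PowerSeries.algebraMap_apply, PowerSeries.coeff_C] using hlin 1 (by norm_num)
  have hc₁ : c₁ = 0 := by simpa using congrArg (Polynomial.coeff · 0) h₁
  have hc₂ : c₂ = 0 := by simpa [Polynomial.coeff_one] using congrArg (Polynomial.coeff · 1) h₁
  simpa [h₀, hc₁, hc₂] using hq

theorem sq_notMem_span_mul_sq_sub_sq [IsDomain k] :
    x ^ 2 ∉ Ideal.span {x * y, x ^ 2 - y ^ 2} := by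
  -- In the chart, `u xy + v (x² - y²) = x²` becomes `ψ u s + ψ v (1 - s²) = 1` after division by
  -- `x²`; its constant term is an impossible identity `(ε u) s + (ε v) (1 - s²) = 1` in `k[s]`.
  intro h
  obtain ⟨u, v, huv⟩ := Ideal.mem_span_pair.mp h
  set s : PowerSeries (Polynomial k) := PowerSeries.C Polynomial.X
  have hψuv : ψ u * s + ψ v * (1 - s ^ 2) = 1 := by
    have := congrArg ψ huv
    simp only [map_add, map_mul, map_sub, map_pow, hψx, hψy] at this
    refine mul_left_cancel₀ (pow_ne_zero 2 PowerSeries.X_ne_zero) ?_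
    linear_combination this
  have hε' :
      Polynomial.C (ε u) * Polynomial.X + Polynomial.C (ε v) * (1 - Polynomial.X ^ 2) = 1 := by
    simpa [constantCoeff_apply_eq_C ψ hψx hψy ε hε, s] using
      congrArg PowerSeries.constantCoeff hψuv
  have hcoeff (n : ℕ) := congrArg (Polynomial.coeff · n) hε'
  have h₂ : ε v = 0 := by simpa [Polynomial.coeff_one, Polynomial.coeff_X] using hcoeff 2
  have h₀ : ε v = 1 := by simpa [Polynomial.coeff_one, Polynomial.coeff_X] using hcoeff 0
  exact zero_ne_one (h₂.symm.trans h₀)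

theorem isIntegrallyClosedIdeal_span_pair_sq [IsDomain k] :
    IsIntegrallyClosedIdeal (Ideal.span {x, y} ^ 2) := by
  rw [span_pair_sq_eq_comap ψ hψx hψy ε hε]
  exact (isIntegrallyClosedIdeal_span_sq PowerSeries.X_prime).comap ψ

end BlowupChart

theorem MvPolynomial.ker_aeval_zero (σ R : Type*) [CommRing R] :
    RingHom.ker (aeval 0 : MvPolynomial σ R →ₐ[R] R) = idealOfVars σ R := by
  ext p
  rw [RingHom.mem_ker, aeval_zero, ← pow_one (idealOfVars σ R), mem_pow_idealOfVars_iff']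
  simp [Finsupp.degree_eq_zero_iff, constantCoeff_eq]

section

open MvPolynomial

variable (k : Type*) [Field k]

noncomputable abbrev originIdeal : Ideal (MvPolynomial (Fin 2) k) :=
  RingHom.ker (aeval 0 : MvPolynomial (Fin 2) k →ₐ[k] k)

theorem originIdeal_eq_span : originIdeal k = Ideal.span {X 0, X 1} := by
  rw [originIdeal, ker_aeval_zero, idealOfVars]
  congr 1
  ext p
  simp [Fin.exists_fin_two, eq_comm]

instance : (originIdeal k).IsMaximal :=
  RingHom.ker_isMaximal_of_surjective _ fun c => ⟨C c, aeval_C _ _⟩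

abbrev LocalPlane : Type _ := Localization.AtPrime (originIdeal k)

namespace LocalPlane

noncomputable def x : LocalPlane k := algebraMap (MvPolynomial (Fin 2) k) (LocalPlane k) (X 0)

noncomputable def y : LocalPlane k := algebraMap (MvPolynomial (Fin 2) k) (LocalPlane k) (X 1)

noncomputable def residue : LocalPlane k →ₐ[k] k :=
  IsLocalization.liftAlgHom (M := (originIdeal k).primeCompl) (f := aeval 0)
    fun s => isUnit_iff_ne_zero.mpr s.2

noncomputable def chartPoly : MvPolynomial (Fin 2) k →ₐ[k] PowerSeries (Polynomial k) :=
  aeval ![PowerSeries.X, PowerSeries.C Polynomial.X * PowerSeries.X]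

theorem isUnit_chartPoly {s : MvPolynomial (Fin 2) k} (hs : s ∈ (originIdeal k).primeCompl) :
    IsUnit (chartPoly k s) := by
  rw [PowerSeries.isUnit_iff_constantCoeff, constantCoeff_apply_eq_C (x := X 0) (y := X 1)
    (chartPoly k) (by simp [chartPoly]) (by simp [chartPoly]) (aeval 0) (originIdeal_eq_span k)]
  exact Polynomial.isUnit_C.mpr (isUnit_iff_ne_zero.mpr hs)

noncomputable def chart : LocalPlane k →ₐ[k] PowerSeries (Polynomial k) :=
  IsLocalization.liftAlgHom (M := (originIdeal k).primeCompl) (f := chartPoly k)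
    fun s => isUnit_chartPoly k s.2

theorem chart_x : chart k (x k) = PowerSeries.X := by
  simp [chart, x, IsLocalization.liftAlgHom_apply, chartPoly]

theorem chart_y : chart k (y k) = PowerSeries.C Polynomial.X * PowerSeries.X := by
  simp [chart, y, IsLocalization.liftAlgHom_apply, chartPoly]

theorem ker_residue : RingHom.ker (residue k) = Ideal.span {x k, y k} := by
  have hsurj : Function.Surjective (residue k) := fun c => ⟨algebraMap k _ c, AlgHom.commutes _ c⟩
  rw [IsLocalRing.eq_maximalIdeal (RingHom.ker_isMaximal_of_surjective _ hsurj),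
    ← IsLocalization.AtPrime.map_eq_maximalIdeal (originIdeal k)]
  refine (congrArg (Ideal.map _) (originIdeal_eq_span k)).trans ?_
  rw [Ideal.map_span, Set.image_pair, x, y]

theorem prime_x : Prime (x k) := by
  have hX : Prime (X 0 : MvPolynomial (Fin 2) k) := X_prime
  have hdisj : Disjoint ((originIdeal k).primeCompl : Set (MvPolynomial (Fin 2) k))
      (Ideal.span {X 0} : Ideal (MvPolynomial (Fin 2) k)) := by
    refine Set.disjoint_left.mpr fun s hs hs0 => hs ?_
    rw [originIdeal_eq_span]
    exact Ideal.span_mono (by simp) hs0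
  have hx := IsLocalization.isPrime_of_isPrime_disjoint _ (LocalPlane k) _
    ((Ideal.span_singleton_prime hX.ne_zero).mpr hX) hdisj
  rw [Ideal.map_span, Set.image_singleton] at hx
  have hx0 : x k ≠ 0 := fun h => PowerSeries.X_ne_zero (R := Polynomial k) <| by
    rw [← chart_x k, h, map_zero]
  exact (Ideal.span_singleton_prime hx0).mp hx

theorem isIntegrallyClosedIdeal_span_x_y_sq :
    IsIntegrallyClosedIdeal (Ideal.span {x k, y k} ^ 2) :=
  isIntegrallyClosedIdeal_span_pair_sq (chart k) (chart_x k) (chart_y k) (residue k) (ker_residue k)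

theorem sq_x_mem_core : x k ^ 2 ∈ core (Ideal.span {x k ^ 2}) :=
  mem_core_span_singleton <| mem_nonZeroDivisors_of_ne_zero (pow_ne_zero 2 (prime_x k).ne_zero)

theorem sq_x_notMem_core : x k ^ 2 ∉ core (Ideal.span {x k, y k} ^ 2) := fun h =>
  sq_notMem_span_mul_sq_sub_sq (chart k) (chart_x k) (chart_y k) (residue k) (ker_residue k)
    (core_le_of_isReduction (isReduction_span_pair_sq _ _) h)

end LocalPlane

end

theorem stmt_11 :
    ∃ (R : Type) (_ : CommRing R), IsNoetherianRing R ∧ IsLocalRing R ∧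
      ∃ I I' : Ideal R, I ≤ I' ∧
        IsIntegrallyClosedIdeal I ∧ IsIntegrallyClosedIdeal I' ∧
        ¬ core I ≤ core I' := by
  open LocalPlane in
  exact ⟨LocalPlane ℚ, inferInstance, inferInstance, inferInstance, Ideal.span {x ℚ ^ 2},
    Ideal.span {x ℚ, y ℚ} ^ 2,
    Ideal.span_le.mpr <| Set.singleton_subset_iff.mpr <|
      Ideal.pow_mem_pow (Ideal.subset_span (by simp)) 2,
    isIntegrallyClosedIdeal_span_sq (prime_x ℚ), isIntegrallyClosedIdeal_span_x_y_sq ℚ,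
    fun hle => sq_x_notMem_core ℚ (hle (sq_x_mem_core ℚ))⟩
end
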